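/- arXiv:1611.07177 — 6 statements merged into one kernel-verified Lean document; each statement's English description precedes it below -/
import Mathlib

section
/- Let p be a prime, let G and H be finitely generated groups, let m ∈ ℕ, and let C ∈ ℕ be a constant. Assume that for every subgroup U₁ ≤ G of index p^k with k ≤ m one has d(U₁) ≤ C·k + d(G), and that for every subgroup U₂ ≤ H of index p^ℓ with ℓ ≤ m one has d(U₂) ≤ C·ℓ + d(H). Then every subgroup U of the direct product G × H of index (G × H : U) = p^m satisfies d(U) ≤ C·m + d(G) + d(H). -/
open Filter Topology
open scoped commutatorElement

/-- `ngen G` is the minimal number of generators `d(G)` of a group `G`. -/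
noncomputable def ngen (G : Type*) [Group G] : ℕ :=
  sInf {n | ∃ S : Finset G, S.card = n ∧ Subgroup.closure (S : Set G) = ⊤}

/-- `phiP p G` is `Φ_p(G)`, the subgroup of `G` generated by all commutators
and all `p`-th powers. -/
def phiP (p : ℕ) (G : Type*) [Group G] : Subgroup G :=
  Subgroup.normalClosure ({x | ∃ a b : G, x = ⁅a, b⁆} ∪ {x | ∃ g : G, x = g ^ p})

instance phiP_normal (p : ℕ) (G : Type*) [Group G] : (phiP p G).Normal :=
  Subgroup.normalClosure_normal

/-- `dp p G = d_p(G)`, the minimal number of generators of `G/Φ_p(G)`. -/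
noncomputable def dp (p : ℕ) (G : Type*) [Group G] : ℕ := ngen (G ⧸ phiP p G)

/-- `subCount G n = s_n(G)`, the number of (finite-index) subgroups of `G`
of index at most `n`. -/
noncomputable def subCount (G : Type*) [Group G] (n : ℕ) : ℕ :=
  Nat.card {H : Subgroup G // 0 < H.index ∧ H.index ≤ n}

/-- `dpMax p G m = d_p(m)`, the maximum of `d_p(U)` over subgroups `U ≤ G`
of index exactly `p^m`. -/
noncomputable def dpMax (p : ℕ) (G : Type*) [Group G] (m : ℕ) : ℕ :=
  sSup {d | ∃ U : Subgroup G, U.index = p ^ m ∧ d = dp p ↥U}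

/-!
Let `P` be the image of `U` in `G` and `K = U ∩ H`. Then `(G × H : U) = (G : P) (H : K)`, so
`(G : P) = p ^ k` and `(H : K) = p ^ l` with `k + l = m`; and `U` is an extension of `K` by `P`,
so lifting generators of `P` and adjoining generators of `K` gives `d(U) ≤ d(P) + d(K)`.
-/

namespace Subgroup

variable {G H : Type*} [Group G] [Group H]

theorem relIndex_sup_of_normal_right (K N : Subgroup G) [N.Normal] :
    K.relIndex (K ⊔ N) = K.relIndex N := by
  let f : N ⧸ K.subgroupOf N → ↥(K ⊔ N) ⧸ K.subgroupOf (K ⊔ N) :=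
    Quotient.map' (inclusion le_sup_right) fun a b hab => by
      simpa [QuotientGroup.leftRel_apply, mem_subgroupOf] using hab
  have hf : Function.Bijective f := by
    constructor
    · rintro ⟨a⟩ ⟨b⟩ hab
      have := Quotient.exact' hab
      exact Quotient.sound' (by simpa [QuotientGroup.leftRel_apply, mem_subgroupOf] using this)
    · rintro ⟨x, hx⟩
      rw [sup_comm] at hx
      obtain ⟨n, hn, k, hk, rfl⟩ := mem_sup_of_normal_left.mp hx
      refine ⟨QuotientGroup.mk ⟨n, hn⟩, Quotient.sound' ?_⟩
      simpa [QuotientGroup.leftRel_apply, mem_subgroupOf] using hk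
  exact (Nat.card_congr (Equiv.ofBijective f hf)).symm

theorem index_comap_inr_mul_index_map_fst (U : Subgroup (G × H)) :
    (U.comap (MonoidHom.inr G H)).index * (U.map (MonoidHom.fst G H)).index = U.index := by
  have hrange : (MonoidHom.inr G H).range = (MonoidHom.fst G H).ker := by
    ext ⟨g, h⟩
    simp [mem_prod, eq_comm]
  rw [index_comap, hrange, ← relIndex_sup_of_normal_right, ← comap_map_eq,
    ← index_comap_of_surjective _ (f := MonoidHom.fst G H) Prod.fst_surjective]
  exact relIndex_mul_index (le_comap_map _ _)

end Subgroup

theorem Nat.exists_eq_pow_of_mul_eq_prime_pow {p a b m : ℕ} (hp : p.Prime)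
    (h : a * b = p ^ m) : ∃ k l, k + l = m ∧ a = p ^ k ∧ b = p ^ l := by
  obtain ⟨k, l, c, d, hkl, hcd, rfl, rfl⟩ :=
    mul_eq_mul_prime_pow hp.prime (h.trans (one_mul _).symm)
  obtain ⟨rfl, rfl⟩ := mul_eq_one.mp hcd.symm
  exact ⟨k, l, hkl, one_mul _, one_mul _⟩

section ngen

variable {Γ Q K : Type*} [Group Γ] [Group Q] [Group K]

theorem ngen_le_card {S : Finset Γ} (hS : Subgroup.closure (S : Set Γ) = ⊤) :
    ngen Γ ≤ S.card :=
  Nat.sInf_le ⟨S, rfl, hS⟩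

theorem ngen_eq_rank [Group.FG Γ] : ngen Γ = Group.rank Γ := by
  obtain ⟨S, hcard, hS⟩ := Group.rank_spec Γ
  refine le_antisymm (hcard ▸ ngen_le_card hS) (le_csInf ⟨_, S, rfl, hS⟩ ?_)
  rintro _ ⟨T, rfl, hT⟩
  exact Group.rank_le hT

theorem ngen_le_ngen_add_ngen_of_ker_le_range [Group.FG Q] [Group.FG K]
    (f : Γ →* Q) (hf : Function.Surjective f) (g : K →* Γ) (hker : f.ker ≤ g.range) :
    ngen Γ ≤ ngen Q + ngen K := by
  classical
  obtain ⟨S, hScard, hS⟩ := Group.rank_spec Q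
  obtain ⟨T, hTcard, hT⟩ := Group.rank_spec K
  set W := Subgroup.closure ((S.image (Function.surjInv hf) ∪ T.image g : Finset Γ) : Set Γ)
  have hfW : W.map f = ⊤ := by
    rw [← top_le_iff, ← hS, Subgroup.closure_le]
    intro q hq
    exact ⟨Function.surjInv hf q,
      Subgroup.subset_closure (Finset.mem_union_left _ (Finset.mem_image_of_mem _ hq)),
      Function.surjInv_eq hf q⟩
  have hgW : g.range ≤ W := by
    rw [MonoidHom.range_eq_map, ← hT, MonoidHom.map_closure, Subgroup.closure_le]
    rintro _ ⟨t, ht, rfl⟩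
    exact Subgroup.subset_closure (Finset.mem_union_right _ (Finset.mem_image_of_mem _ ht))
  have hW : W = ⊤ := by
    rw [← sup_eq_left.mpr (hker.trans hgW), ← Subgroup.comap_map_eq, hfW, Subgroup.comap_top]
  calc ngen Γ ≤ (S.image (Function.surjInv hf) ∪ T.image g).card := ngen_le_card hW
    _ ≤ S.card + T.card :=
      (Finset.card_union_le _ _).trans (add_le_add Finset.card_image_le Finset.card_image_le)
    _ = ngen Q + ngen K := by rw [ngen_eq_rank, ngen_eq_rank, hScard, hTcard]

end ngen

theorem ngen_le_ngen_map_fst_add_ngen_comap_inr {G H : Type*} [Group G] [Group H]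
    (U : Subgroup (G × H)) [Group.FG (U.map (MonoidHom.fst G H))]
    [Group.FG (U.comap (MonoidHom.inr G H))] :
    ngen U ≤ ngen (U.map (MonoidHom.fst G H)) + ngen (U.comap (MonoidHom.inr G H)) := by
  refine ngen_le_ngen_add_ngen_of_ker_le_range _ (MonoidHom.subgroupMap_surjective _ U)
    ((MonoidHom.inr G H).subgroupComap U) ?_
  rintro ⟨⟨g, h⟩, hu⟩ hker
  obtain rfl : g = 1 := congrArg (fun x => x.1) hker
  exact ⟨⟨h, hu⟩, rfl⟩

theorem generators_of_subgroup_of_direct_product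
    (p : ℕ) (hp : p.Prime) (G H : Type*) [Group G] [Group H]
    [Group.FG G] [Group.FG H] (m C : ℕ)
    (hG : ∀ k : ℕ, k ≤ m → ∀ U₁ : Subgroup G, U₁.index = p ^ k →
      ngen ↥U₁ ≤ C * k + ngen G)
    (hH : ∀ l : ℕ, l ≤ m → ∀ U₂ : Subgroup H, U₂.index = p ^ l →
      ngen ↥U₂ ≤ C * l + ngen H)
    (U : Subgroup (G × H)) (hU : U.index = p ^ m) :
    ngen ↥U ≤ C * m + ngen G + ngen H := by
  set P := U.map (MonoidHom.fst G H)
  set K := U.comap (MonoidHom.inr G H)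
  obtain ⟨l, k, rfl, hK, hP⟩ := Nat.exists_eq_pow_of_mul_eq_prime_pow hp
    ((U.index_comap_inr_mul_index_map_fst).trans hU)
  have : K.FiniteIndex := ⟨hK ▸ pow_ne_zero _ hp.ne_zero⟩
  have : P.FiniteIndex := ⟨hP ▸ pow_ne_zero _ hp.ne_zero⟩
  have : Group.FG K := K.fg_of_index_ne_zero
  have : Group.FG P := P.fg_of_index_ne_zero
  calc ngen U ≤ ngen P + ngen K := ngen_le_ngen_map_fst_add_ngen_comap_inr U
    _ ≤ (C * k + ngen G) + (C * l + ngen H) :=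
      add_le_add (hG k (Nat.le_add_left k l) P hP) (hH l (Nat.le_add_right l k) K hK)
    _ = C * (l + k) + ngen G + ngen H := by ring
end

section
/- Let p be a prime and let G be a p-group generated by m elements g₁, …, g_m. Let M be a module over the group algebra F_p[G] that is generated, as an F_p[G]-module, by d elements. Let N be an F_p[G]-submodule of M such that the quotient M/N has dimension 1 as an F_p-vector space (equivalently, M/N has exactly p elements). Then N can be generated, as an F_p[G]-module, by at most d + m − 1 elements. -/
/-!
Pick a generator `x₀ ∈ S` outside `N`. Since `M ⧸ N` has prime order, its image generates `M ⧸ N`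
additively, so every `s ∈ S` is congruent to an integer multiple `c s • x₀` modulo `N`; and a
`p`-group fixes every point of a set of `p` elements once it fixes one (here `0`), so `G` acts
trivially on `M ⧸ N`. Hence the `d - 1` elements `s - c s • x₀` (`s ≠ x₀`) and the `m` elements
`gⱼ • x₀ - x₀` lie in `N`. Modulo their span `N'` the image of `x₀` is fixed by all of `G` and
generates, so `M ⧸ N'` is the cyclic group it spans, of order dividing `p`. As `N' ≤ N` and
`M ⧸ N` already has `p` elements, `N' = N`.
-/

open MonoidAlgebra

theorem IsPGroup.fixedPoints_eq_univ_of_card_eq_prime {p : ℕ} [hp : Fact p.Prime]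
    {G : Type*} [Group G] (hG : IsPGroup p G) {α : Type*} [MulAction G α]
    (hα : Nat.card α = p) (hfix : (MulAction.fixedPoints G α).Nonempty) :
    MulAction.fixedPoints G α = Set.univ := by
  have : Finite α := Nat.finite_of_card_ne_zero (hα ▸ hp.out.ne_zero)
  have hdvd : p ∣ Nat.card (MulAction.fixedPoints G α) :=
    Nat.modEq_zero_iff_dvd.mp ((hG.card_modEq_card_fixedPoints α).symm.trans
      (hα ▸ Nat.modEq_zero_iff_dvd.mpr dvd_rfl))
  have := hfix.to_subtype
  rw [Set.eq_univ_iff_ncard, hα, ← Nat.card_coe_set_eq]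
  exact le_antisymm (hα ▸ Finite.card_subtype_le _) (Nat.le_of_dvd Nat.card_pos hdvd)

theorem IsPGroup.of_smul_eq_self_of_card_eq_prime {p : ℕ} [Fact p.Prime]
    {G : Type*} [Group G] (hG : IsPGroup p G) {k : Type*} [Semiring k]
    {Q : Type*} [AddCommMonoid Q] [Module (MonoidAlgebra k G) Q]
    (hQ : Nat.card Q = p) (g : G) (y : Q) : of k G g • y = y := by
  let _ := MulAction.compHom Q (of k G)
  have hfix := hG.fixedPoints_eq_univ_of_card_eq_prime hQ ⟨0, fun g => smul_zero (of k G g)⟩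
  exact (hfix ▸ Set.mem_univ y : y ∈ MulAction.fixedPoints G Q) g

theorem Submodule.exists_sub_zsmul_mem_of_card_quotient_eq_prime {R M : Type*} [Ring R]
    [AddCommGroup M] [Module R M] {N : Submodule R M} {p : ℕ} [Fact p.Prime]
    (hN : Nat.card (M ⧸ N) = p) {x : M} (hx : x ∉ N) (y : M) : ∃ k : ℤ, y - k • x ∈ N := by
  obtain ⟨k, hk⟩ := mem_zmultiples_of_prime_card hN (g := N.mkQ x) (g' := N.mkQ y)
    (by simpa using hx)
  exact ⟨k, (Submodule.Quotient.eq N).1 (by simpa using hk.symm)⟩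

theorem Submodule.eq_of_le_of_card_quotient_le {R M : Type*} [Ring R] [AddCommGroup M]
    [Module R M] {N N' : Submodule R M} (hle : N' ≤ N) [Finite (M ⧸ N')]
    (hcard : Nat.card (M ⧸ N') ≤ Nat.card (M ⧸ N)) : N' = N := by
  refine le_antisymm hle fun x hx => ?_
  have hinj := ((factor_surjective hle).bijective_of_nat_card_le hcard).injective
  rw [← Submodule.Quotient.mk_eq_zero]
  exact hinj (by simpa using hx)

namespace MonoidAlgebra

variable {G : Type*} [Group G]

theorem of_smul_eq_self_of_closure_eq_top {k : Type*} [Semiring k]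
    {Q : Type*} [AddCommMonoid Q] [Module (MonoidAlgebra k G) Q] {s : Set G}
    (hs : Subgroup.closure s = ⊤) {x : Q} (hx : ∀ g ∈ s, of k G g • x = x) (g : G) :
    of k G g • x = x := by
  let _ := MulAction.compHom Q (of k G)
  have : Subgroup.closure s ≤ MulAction.stabilizer G x := (Subgroup.closure_le _).2 hx
  exact this (hs ▸ Subgroup.mem_top g)

variable {n : ℕ} {M : Type*} [AddCommGroup M] [Module (MonoidAlgebra (ZMod n) G) M]

theorem smul_mem_zmultiples_of_forall_of_smul_eq_self {x : M}
    (hx : ∀ g, of (ZMod n) G g • x = x) (r : MonoidAlgebra (ZMod n) G) :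
    r • x ∈ AddSubgroup.zmultiples x := by
  induction r using MonoidAlgebra.induction_linear with
  | zero => rw [zero_smul]; exact zero_mem _
  | add r r' hr hr' => rw [add_smul]; exact add_mem hr hr'
  | single g a =>
    have : single g a = (ZMod.cast a : ℤ) • of (ZMod n) G g := by
      rw [of_apply, smul_single, zsmul_one, ZMod.intCast_zmod_cast]
    rw [this, smul_assoc, hx]
    exact AddSubgroup.zsmul_mem_zmultiples x _

theorem card_dvd_of_span_singleton_eq_top {x : M} (hx : ∀ g, of (ZMod n) G g • x = x)
    (hspan : Submodule.span (MonoidAlgebra (ZMod n) G) {x} = ⊤) : Nat.card M ∣ n := by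
  have htop : AddSubgroup.zmultiples x = ⊤ := by
    refine eq_top_iff.2 fun y _ => ?_
    obtain ⟨r, rfl⟩ := Submodule.mem_span_singleton.1 (hspan ▸ Submodule.mem_top : y ∈ _)
    exact smul_mem_zmultiples_of_forall_of_smul_eq_self hx r
  have hn : n • x = 0 := by
    rw [← Nat.cast_smul_eq_nsmul (MonoidAlgebra (ZMod n) G),
      ← map_natCast (algebraMap (ZMod n) _), ZMod.natCast_self, map_zero, zero_smul]
  rw [← AddSubgroup.card_top, ← htop, Nat.card_zmultiples]
  exact addOrderOf_dvd_of_nsmul_eq_zero hn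

variable [DecidableEq M] {m : ℕ}

variable (n) in
noncomputable def codimOneGenerators (S : Finset M) (x₀ : M) (c : M → ℤ) (g : Fin m → G) : Finset M :=
  (S.erase x₀).image (fun s => s - c s • x₀) ∪
    Finset.univ.image (fun j => of (ZMod n) G (g j) • x₀ - x₀)

theorem card_codimOneGenerators_le {S : Finset M} {x₀ : M} (hx₀ : x₀ ∈ S) (c : M → ℤ)
    (g : Fin m → G) : (codimOneGenerators n S x₀ c g).card ≤ S.card + m - 1 := by
  have hS : 0 < S.card := Finset.card_pos.2 ⟨x₀, hx₀⟩
  grw [codimOneGenerators, Finset.card_union_le, Finset.card_image_le, Finset.card_image_le,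
    Finset.card_erase_of_mem hx₀, Finset.card_univ, Fintype.card_fin]
  omega

theorem span_codimOneGenerators_le {S : Finset M} {x₀ : M} {c : M → ℤ} {g : Fin m → G}
    {N : Submodule (MonoidAlgebra (ZMod n) G) M} (hc : ∀ s, s - c s • x₀ ∈ N)
    (hg : ∀ j, of (ZMod n) G (g j) • x₀ - x₀ ∈ N) :
    Submodule.span (MonoidAlgebra (ZMod n) G) (codimOneGenerators n S x₀ c g : Set M) ≤ N := by
  rw [Submodule.span_le]
  intro t ht
  simp only [codimOneGenerators, Finset.coe_union, Finset.coe_image, Set.mem_union,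
    Set.mem_image] at ht
  rcases ht with ⟨s, -, rfl⟩ | ⟨j, -, rfl⟩
  exacts [hc s, hg j]

theorem card_quotient_span_codimOneGenerators_dvd {S : Finset M} {x₀ : M} (hx₀ : x₀ ∈ S)
    (hS : Submodule.span (MonoidAlgebra (ZMod n) G) (S : Set M) = ⊤) (c : M → ℤ)
    {g : Fin m → G} (hg : Subgroup.closure (Set.range g) = ⊤) :
    Nat.card (M ⧸ Submodule.span (MonoidAlgebra (ZMod n) G)
      (codimOneGenerators n S x₀ c g : Set M)) ∣ n := by
  set N' := Submodule.span (MonoidAlgebra (ZMod n) G) (codimOneGenerators n S x₀ c g : Set M)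
  have hfix : ∀ h, of (ZMod n) G h • N'.mkQ x₀ = N'.mkQ x₀ := by
    refine of_smul_eq_self_of_closure_eq_top hg ?_
    rintro _ ⟨j, rfl⟩
    rw [← LinearMap.map_smul, Submodule.mkQ_apply, Submodule.mkQ_apply, Submodule.Quotient.eq]
    exact Submodule.subset_span (by simp [codimOneGenerators])
  refine card_dvd_of_span_singleton_eq_top hfix (eq_top_iff.2 ?_)
  rw [← Submodule.range_mkQ N', LinearMap.range_eq_map, ← hS, Submodule.map_span,
    Submodule.span_le]
  rintro _ ⟨s, hs, rfl⟩
  by_cases hsx : s = x₀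
  · subst hsx
    exact Submodule.mem_span_singleton_self _
  have hs' : N'.mkQ s = c s • N'.mkQ x₀ := by
    rw [← map_zsmul, Submodule.mkQ_apply, Submodule.mkQ_apply, Submodule.Quotient.eq]
    refine Submodule.subset_span (Finset.mem_union_left _ ?_)
    exact Finset.mem_image_of_mem _ (Finset.mem_erase.2 ⟨hsx, hs⟩)
  rw [SetLike.mem_coe, hs']
  exact zsmul_mem (Submodule.mem_span_singleton_self _) _

end MonoidAlgebra

theorem submodule_of_codimension_one_generators
    (p : ℕ) (hp : p.Prime) (G : Type*) [Group G] (hpg : IsPGroup p G)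
    (m : ℕ) (g : Fin m → G) (hgen : Subgroup.closure (Set.range g) = ⊤)
    (M : Type*) [AddCommGroup M] [Module (MonoidAlgebra (ZMod p) G) M]
    (d : ℕ) (S : Finset M) (hScard : S.card = d)
    (hSgen : Submodule.span (MonoidAlgebra (ZMod p) G) (S : Set M) = ⊤)
    (N : Submodule (MonoidAlgebra (ZMod p) G) M)
    (hN : Nat.card (M ⧸ N) = p) :
    ∃ T : Finset M, T.card ≤ d + m - 1 ∧
      Submodule.span (MonoidAlgebra (ZMod p) G) (T : Set M) = N := by
  classical
  have : Fact p.Prime := ⟨hp⟩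
  obtain ⟨x₀, hx₀S, hx₀N⟩ : ∃ x₀ ∈ S, x₀ ∉ N := by
    by_contra! hSN
    have hNtop : N = ⊤ := eq_top_iff.2 (hSgen ▸ Submodule.span_le.2 hSN)
    simp [hNtop, hp.ne_one.symm] at hN
  choose c hc using Submodule.exists_sub_zsmul_mem_of_card_quotient_eq_prime hN hx₀N
  have hg (j : Fin m) : of (ZMod p) G (g j) • x₀ - x₀ ∈ N := by
    rw [← Submodule.Quotient.eq, Submodule.Quotient.mk_smul]
    exact hpg.of_smul_eq_self_of_card_eq_prime hN _ _
  have hcard := card_quotient_span_codimOneGenerators_dvd hx₀S hSgen c hgen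
  have : Finite (M ⧸ _) := Nat.finite_of_card_ne_zero (ne_zero_of_dvd_ne_zero hp.ne_zero hcard)
  refine ⟨codimOneGenerators p S x₀ c g, hScard ▸ card_codimOneGenerators_le hx₀S c g,
    Submodule.eq_of_le_of_card_quotient_le (span_codimOneGenerators_le hc hg) ?_⟩
  rw [hN]
  exact Nat.le_of_dvd hp.pos hcard
end

section
/- Let p be a prime, let G be a p-group generated by m ≥ 1 elements, and let M be a module over the group algebra F_p[G] that is generated, as an F_p[G]-module, by d elements. Let N be an F_p[G]-submodule of M such that the quotient M/N is finite with exactly p^ℓ elements. Then N can be generated, as an F_p[G]-module, by at most d + ℓ·(m − 1) elements. -/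
/-!
Induction on `ℓ`. When `M ⧸ N` is nontrivial, the `p`-group `G` acting on the finite `p`-group of
additive maps `M ⧸ N →+ ZMod p` fixes a nonzero one; its kernel is a submodule `N ≤ N'` of index
`p` on whose quotient `G` acts trivially. If `S` generates `M` and `x₀ ∈ S ∖ N'`, then `N'` is
generated by the `x - c x • x₀` (`x ∈ S ∖ {x₀}`, `c x` chosen so that this lies in `N'`) together
with the `m` elements `g j • x₀ - x₀`: modulo the latter, `r • x₀ ≡ ε(r) • x₀` for every
`r : F_p[G]`, where `ε` is the augmentation. So `N'` needs at most `|S| + m - 1` generators, and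
`N'/N` has order `p ^ (ℓ - 1)`.
-/

open MonoidAlgebra

namespace MonoidAlgebra

section CommRing

variable {k G : Type*} [CommRing k] [Group G]

noncomputable def augmentation : MonoidAlgebra k G →ₐ[k] k := lift k k G 1

@[simp] lemma augmentation_single (γ : G) (c : k) : augmentation (single γ c) = c := by
  simp [augmentation]

variable {M : Type*} [AddCommGroup M] [Module (MonoidAlgebra k G) M]
  {W : Submodule (MonoidAlgebra k G) M} {s : Set G} {x : M}

lemma of_smul_sub_self_mem (hs : Subgroup.closure s = ⊤)
    (hx : ∀ γ ∈ s, of k G γ • x - x ∈ W) (γ : G) : of k G γ • x - x ∈ W := by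
  have hγ : γ ∈ Subgroup.closure s := hs ▸ Subgroup.mem_top γ
  induction hγ using Subgroup.closure_induction with
  | mem γ hγ => exact hx γ hγ
  | one => rw [map_one, one_smul, sub_self]; exact W.zero_mem
  | mul γ δ _ _ hγ hδ =>
    have h : of k G (γ * δ) • x - x = of k G γ • (of k G δ • x - x) + (of k G γ • x - x) := by
      rw [map_mul, mul_smul, smul_sub]; abel
    exact h ▸ W.add_mem (W.smul_mem _ hδ) hγ
  | inv γ _ hγ =>
    have h : of k G γ⁻¹ • x - x = -(of k G γ⁻¹ • (of k G γ • x - x)) := by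
      rw [smul_sub, ← mul_smul, ← map_mul, inv_mul_cancel, map_one, one_smul, neg_sub]
    exact h ▸ W.neg_mem (W.smul_mem _ hγ)

lemma smul_sub_augmentation_smul_mem (hs : Subgroup.closure s = ⊤)
    (hx : ∀ γ ∈ s, of k G γ • x - x ∈ W) (r : MonoidAlgebra k G) :
    r • x - algebraMap k (MonoidAlgebra k G) (augmentation r) • x ∈ W := by
  induction r using MonoidAlgebra.induction_linear with
  | zero => simp
  | add r r' hr hr' =>
    have h := W.add_mem hr hr'
    rwa [map_add, map_add, add_smul, add_smul, add_sub_add_comm]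
  | single γ c =>
    rw [augmentation_single, single_eq_algebraMap_mul_of, mul_smul, ← smul_sub]
    exact W.smul_mem _ (of_smul_sub_self_mem hs hx γ)

end CommRing

section Field

variable {k G : Type*} [Field k] [Group G] {M : Type*} [AddCommGroup M]
  [Module (MonoidAlgebra k G) M]

lemma eq_of_le_of_sup_span_singleton_eq_top {W N : Submodule (MonoidAlgebra k G) M} {s : Set G}
    {x : M} (hs : Subgroup.closure s = ⊤) (hx : ∀ γ ∈ s, of k G γ • x - x ∈ W)
    (hsup : W ⊔ Submodule.span (MonoidAlgebra k G) {x} = ⊤) (hWN : W ≤ N) (hxN : x ∉ N) :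
    W = N := by
  refine le_antisymm hWN fun y hy => ?_
  obtain ⟨w, hw, _, hz, rfl⟩ := Submodule.mem_sup.mp (hsup ▸ Submodule.mem_top : y ∈ _)
  obtain ⟨r, rfl⟩ := Submodule.mem_span_singleton.mp hz
  have hr := smul_sub_augmentation_smul_mem hs hx r
  -- modulo `W`, `w + r • x` is the scalar multiple `augmentation r • x`
  have hcN : algebraMap k (MonoidAlgebra k G) (augmentation r) • x ∈ N := by
    have := N.sub_mem hy (hWN (W.add_mem hw hr))
    rwa [add_sub_add_left_eq_sub, sub_sub_cancel] at this
  have hc : augmentation r = 0 := by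
    by_contra hc
    refine hxN ?_
    have := N.smul_mem (algebraMap k (MonoidAlgebra k G) (augmentation r)⁻¹) hcN
    rwa [← mul_smul, ← map_mul, inv_mul_cancel₀ hc, map_one, one_smul] at this
  rw [hc, map_zero, zero_smul, sub_zero] at hr
  exact W.add_mem hw hr

end Field

end MonoidAlgebra

section Invariant

variable {p : ℕ} {G : Type*} [Group G] {Q : Type*} [AddCommGroup Q]
  [Module (MonoidAlgebra (ZMod p) G) Q]

lemma map_smul_eq_augmentation_mul (φ : Q →+ ZMod p)
    (hφ : ∀ (γ : G) (x : Q), φ (of (ZMod p) G γ • x) = φ x)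
    (r : MonoidAlgebra (ZMod p) G) (x : Q) : φ (r • x) = augmentation r * φ x := by
  induction r using MonoidAlgebra.induction_linear with
  | zero => rw [zero_smul, map_zero, map_zero, zero_mul]
  | add r r' hr hr' => rw [add_smul, map_add, hr, hr', map_add, add_mul]
  | single γ c =>
    obtain ⟨n, rfl⟩ := ZMod.intCast_surjective c
    rw [augmentation_single, single_eq_algebraMap_mul_of, map_intCast, mul_smul,
      Int.cast_smul_eq_zsmul, map_zsmul, hφ, zsmul_eq_mul]

lemma exists_invariant_addMonoidHom_ne_zero [Fact p.Prime] (hpg : IsPGroup p G) [Finite Q]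
    [Nontrivial Q] :
    ∃ φ : Q →+ ZMod p, φ ≠ 0 ∧ ∀ (γ : G) (x : Q), φ (of (ZMod p) G γ • x) = φ x := by
  let _ : DistribMulAction G Q := DistribMulAction.compHom Q (of (ZMod p) G)
  have : Module (ZMod p) Q := AddCommGroup.zmodModule fun x => by
    rw [← Nat.cast_smul_eq_nsmul (MonoidAlgebra (ZMod p) G), ← map_natCast
      (algebraMap (ZMod p) (MonoidAlgebra (ZMod p) G)), ZMod.natCast_self, map_zero, zero_smul]
  have : Finite (Q →+ ZMod p) := Finite.of_injective _ DFunLike.coe_injective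
  obtain ⟨x, hx⟩ := exists_ne (0 : Q)
  obtain ⟨f, hf⟩ : ∃ f : Q →ₗ[ZMod p] ZMod p, f x ≠ 0 := by
    by_contra! h
    exact hx ((Module.forall_dual_apply_eq_zero_iff (ZMod p) x).mp h)
  have hf₀ : f.toAddMonoidHom ≠ 0 := fun h => hf (DFunLike.congr_fun h x)
  have hdvd : p ∣ Nat.card (Q →+ ZMod p) :=
    (dvd_of_eq (addOrderOf_eq_prime (by ext; simp) hf₀).symm).trans (addOrderOf_dvd_natCard _)
  -- `Gᵈᵐᵃ = Gᵐᵒᵖ` acts on `Q →+ ZMod p` by precomposition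
  have hpg' : IsPGroup p Gᵈᵐᵃ := hpg.of_equiv (MulEquiv.inv' G)
  obtain ⟨φ, hφ, hφ₀⟩ :=
    hpg'.exists_fixed_point_of_prime_dvd_card_of_fixed_point (Q →+ ZMod p) hdvd (a := 0)
      fun _ => rfl
  exact ⟨φ, hφ₀.symm, fun γ => DFunLike.congr_fun (hφ (DomMulAct.mk γ))⟩

end Invariant

lemma Submodule.card_quotient_comap_subtype_mul_card_quotient {R M : Type*} [Ring R]
    [AddCommGroup M] [Module R M] {N N' : Submodule R M} (h : N ≤ N') :
    Nat.card (N' ⧸ N.comap N'.subtype) * Nat.card (M ⧸ N') = Nat.card (M ⧸ N) :=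
  AddSubgroup.relIndex_mul_index (H := N.toAddSubgroup) (K := N'.toAddSubgroup) h

lemma Submodule.exists_finset_span_eq_top_of_span_eq {R M : Type*} [Semiring R]
    [AddCommMonoid M] [Module R M] {N : Submodule R M} {T : Finset M} (h : span R (T : Set M) = N) :
    ∃ T' : Finset N, T'.card ≤ T.card ∧ span R (T' : Set N) = ⊤ := by
  subst h
  refine ⟨T.preimage Subtype.val Subtype.val_injective.injOn, ?_, ?_⟩
  · exact Finset.card_le_card_of_injOn Subtype.val (fun _ ha => Finset.mem_preimage.mp ha)
      Subtype.val_injective.injOn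
  · rw [Finset.coe_preimage]
    exact span_span_coe_preimage

section Main

variable {p : ℕ} [Fact p.Prime] {G : Type*} [Group G] {M : Type*} [AddCommGroup M]
  [Module (MonoidAlgebra (ZMod p) G) M]

lemma exists_le_card_quotient_eq_of_isPGroup (hpg : IsPGroup p G)
    (N : Submodule (MonoidAlgebra (ZMod p) G) M) [Finite (M ⧸ N)] [Nontrivial (M ⧸ N)] :
    ∃ N' : Submodule (MonoidAlgebra (ZMod p) G) M, N ≤ N' ∧ Nat.card (M ⧸ N') = p ∧
      ∀ (γ : G) (x : M), of (ZMod p) G γ • x - x ∈ N' := by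
  obtain ⟨φ₀, hφ₀, hφ₀G⟩ := exists_invariant_addMonoidHom_ne_zero hpg (Q := M ⧸ N)
  let φ : M →+ ZMod p := φ₀.comp N.mkQ.toAddMonoidHom
  have hφG (γ : G) (x : M) : φ (of (ZMod p) G γ • x) = φ x := hφ₀G γ (N.mkQ x)
  let N' : Submodule (MonoidAlgebra (ZMod p) G) M :=
    { toAddSubmonoid := φ.ker.toAddSubmonoid
      smul_mem' r x hx := by
        simp only [AddSubmonoid.mem_carrier, AddSubgroup.mem_toAddSubmonoid,
          AddMonoidHom.mem_ker] at hx ⊢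
        rw [map_smul_eq_augmentation_mul φ hφG, hx, mul_zero] }
  obtain ⟨x, hx⟩ : ∃ x, φ x ≠ 0 := by
    by_contra! h
    exact hφ₀ (AddMonoidHom.ext fun q => Quotient.inductionOn' q h)
  have hφ_surj : Function.Surjective φ := fun z => by
    obtain ⟨n, hn⟩ := ZMod.intCast_surjective (z / φ x)
    exact ⟨n • x, by rw [map_zsmul, zsmul_eq_mul, hn, div_mul_cancel₀ _ hx]⟩
  refine ⟨N', fun y hy => ?_, ?_, fun γ y => ?_⟩
  · show φ₀ (N.mkQ y) = 0
    rw [Submodule.mkQ_apply, (Submodule.Quotient.mk_eq_zero N).mpr hy, map_zero]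
  · show φ.ker.index = p
    rw [AddSubgroup.index_ker, AddMonoidHom.range_eq_top.mpr hφ_surj, Nat.card_congr
      AddSubgroup.topEquiv.toEquiv, Nat.card_zmod]
  · show φ _ = 0
    rw [map_sub, hφG, sub_self]

lemma exists_finset_span_eq_of_card_quotient_eq_prime {m : ℕ} (g : Fin m → G)
    (hgen : Subgroup.closure (Set.range g) = ⊤) {S : Finset M}
    (hS : Submodule.span (MonoidAlgebra (ZMod p) G) (S : Set M) = ⊤)
    {N : Submodule (MonoidAlgebra (ZMod p) G) M} (hN : Nat.card (M ⧸ N) = p)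
    (hNG : ∀ (γ : G) (x : M), of (ZMod p) G γ • x - x ∈ N) :
    ∃ T : Finset M, T.card ≤ S.card + (m - 1) ∧
      Submodule.span (MonoidAlgebra (ZMod p) G) (T : Set M) = N := by
  classical
  obtain ⟨x₀, hx₀S, hx₀N⟩ : ∃ x₀ ∈ S, x₀ ∉ N := by
    by_contra! h
    have hN_top : N = ⊤ := top_le_iff.mp (hS ▸ Submodule.span_le.mpr h)
    have hN_one : Nat.card (M ⧸ N) = 1 :=
      AddSubgroup.index_eq_one.mpr (Submodule.toAddSubgroup_eq_top.mpr hN_top)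
    exact (Fact.out : p.Prime).one_lt.ne' (hN.symm.trans hN_one)
  have hcyclic (x : M) : ∃ n : ℤ, x - n • x₀ ∈ N := by
    have hx₀ : Submodule.Quotient.mk (p := N) x₀ ≠ 0 := by
      rwa [Ne, Submodule.Quotient.mk_eq_zero]
    obtain ⟨n, hn⟩ := mem_zmultiples_of_prime_card hN hx₀ (g' := Submodule.Quotient.mk x)
    refine ⟨n, ?_⟩
    rw [← Submodule.Quotient.mk_eq_zero, Submodule.Quotient.mk_sub, ← hn]
    simp
  choose c hc using hcyclic
  set T : Finset M := (S.erase x₀).image (fun x => x - c x • x₀) ∪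
    Finset.univ.image (fun j => of (ZMod p) G (g j) • x₀ - x₀) with hT
  set W := Submodule.span (MonoidAlgebra (ZMod p) G) (T : Set M)
  refine ⟨T, ?_, ?_⟩
  · have hS_pos := Finset.card_pos.mpr ⟨x₀, hx₀S⟩
    calc T.card ≤ (S.erase x₀).card + (Finset.univ : Finset (Fin m)).card :=
          (Finset.card_union_le _ _).trans (add_le_add Finset.card_image_le Finset.card_image_le)
      _ ≤ S.card + (m - 1) := by
          rw [Finset.card_erase_of_mem hx₀S, Finset.card_univ, Fintype.card_fin]
          omega
  have hTN : (T : Set M) ⊆ N := by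
    intro y hy
    simp only [hT, Finset.coe_union, Finset.coe_image, Set.mem_union, Set.mem_image] at hy
    rcases hy with ⟨x, -, rfl⟩ | ⟨j, -, rfl⟩
    exacts [hc x, hNG (g j) x₀]
  have hx₀G : ∀ γ ∈ Set.range g, of (ZMod p) G γ • x₀ - x₀ ∈ W := by
    rintro _ ⟨j, rfl⟩
    exact Submodule.subset_span
      (Finset.mem_union_right _ (Finset.mem_image_of_mem _ (Finset.mem_univ j)))
  have hsup : W ⊔ Submodule.span (MonoidAlgebra (ZMod p) G) {x₀} = ⊤ := by
    refine top_le_iff.mp (hS ▸ Submodule.span_le.mpr fun x hx => ?_)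
    by_cases hxx₀ : x = x₀
    · exact Submodule.mem_sup_right (hxx₀ ▸ Submodule.mem_span_singleton_self x)
    · have hxT : x - c x • x₀ ∈ W := Submodule.subset_span
        (Finset.mem_union_left _ (Finset.mem_image_of_mem _ (Finset.mem_erase.mpr ⟨hxx₀, hx⟩)))
      exact sub_add_cancel x (c x • x₀) ▸ Submodule.add_mem_sup hxT
        (zsmul_mem (Submodule.mem_span_singleton_self x₀) _)
  exact eq_of_le_of_sup_span_singleton_eq_top hgen hx₀G hsup (Submodule.span_le.mpr hTN) hx₀N

lemma exists_finset_span_eq_of_card_quotient_eq_pow (hpg : IsPGroup p G) {m : ℕ} (g : Fin m → G)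
    (hgen : Subgroup.closure (Set.range g) = ⊤) (ℓ : ℕ) {S : Finset M}
    (hS : Submodule.span (MonoidAlgebra (ZMod p) G) (S : Set M) = ⊤)
    {N : Submodule (MonoidAlgebra (ZMod p) G) M} (hN : Nat.card (M ⧸ N) = p ^ ℓ) :
    ∃ T : Finset M, T.card ≤ S.card + ℓ * (m - 1) ∧
      Submodule.span (MonoidAlgebra (ZMod p) G) (T : Set M) = N := by
  have hp : p.Prime := Fact.out
  induction ℓ generalizing M with
  | zero =>
    have hN_top := Submodule.toAddSubgroup_eq_top.mp (AddSubgroup.index_eq_one.mp hN)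
    exact ⟨S, by simp, hS.trans hN_top.symm⟩
  | succ ℓ ih =>
    have : Finite (M ⧸ N) := Nat.finite_of_card_ne_zero (hN ▸ pow_ne_zero _ hp.ne_zero)
    have : Nontrivial (M ⧸ N) := by
      rw [← Finite.one_lt_card_iff_nontrivial, hN]
      exact Nat.one_lt_pow ℓ.succ_ne_zero hp.one_lt
    obtain ⟨N', hNN', hN'_card, hN'G⟩ := exists_le_card_quotient_eq_of_isPGroup hpg N
    obtain ⟨T', hT'_card, hT'⟩ :=
      exists_finset_span_eq_of_card_quotient_eq_prime g hgen hS hN'_card hN'G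
    obtain ⟨S', hS'_card, hS'⟩ := Submodule.exists_finset_span_eq_top_of_span_eq hT'
    have hN_rel : Nat.card (N' ⧸ N.comap N'.subtype) = p ^ ℓ := by
      have h := Submodule.card_quotient_comap_subtype_mul_card_quotient hNN'
      rw [hN'_card, hN, pow_succ] at h
      exact Nat.eq_of_mul_eq_mul_right hp.pos h
    obtain ⟨T, hT_card, hT⟩ := ih hS' hN_rel
    refine ⟨T.map (Function.Embedding.subtype _), ?_, ?_⟩
    · rw [Finset.card_map, add_one_mul]
      omega
    · rw [Finset.coe_map, Function.Embedding.coe_subtype, ← N'.coe_subtype, ← Submodule.map_span,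
        hT, Submodule.map_comap_subtype, inf_of_le_right hNN']

end Main

theorem submodule_of_finite_index_generators_general
    (p : ℕ) (hp : p.Prime) (G : Type*) [Group G] (hpg : IsPGroup p G)
    (m : ℕ) (g : Fin m → G)
    (hgen : Subgroup.closure (Set.range g) = ⊤)
    (M : Type*) [AddCommGroup M] [Module (MonoidAlgebra (ZMod p) G) M]
    (d : ℕ) (S : Finset M) (hScard : S.card = d)
    (hSgen : Submodule.span (MonoidAlgebra (ZMod p) G) (S : Set M) = ⊤)
    (N : Submodule (MonoidAlgebra (ZMod p) G) M) (ℓ : ℕ)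
    (hN : Nat.card (M ⧸ N) = p ^ ℓ) :
    ∃ T : Finset M, T.card ≤ d + ℓ * (m - 1) ∧
      Submodule.span (MonoidAlgebra (ZMod p) G) (T : Set M) = N := by
  have : Fact p.Prime := ⟨hp⟩
  exact hScard ▸ exists_finset_span_eq_of_card_quotient_eq_pow hpg g hgen ℓ hSgen hN

theorem submodule_of_finite_index_generators
    (p : ℕ) (hp : p.Prime) (G : Type*) [Group G] (hpg : IsPGroup p G)
    (m : ℕ) (hm : 1 ≤ m) (g : Fin m → G)
    (hgen : Subgroup.closure (Set.range g) = ⊤)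
    (M : Type*) [AddCommGroup M] [Module (MonoidAlgebra (ZMod p) G) M]
    (d : ℕ) (S : Finset M) (hScard : S.card = d)
    (hSgen : Submodule.span (MonoidAlgebra (ZMod p) G) (S : Set M) = ⊤)
    (N : Submodule (MonoidAlgebra (ZMod p) G) M) (ℓ : ℕ)
    (hN : Nat.card (M ⧸ N) = p ^ ℓ) :
    ∃ T : Finset M, T.card ≤ d + ℓ * (m - 1) ∧
      Submodule.span (MonoidAlgebra (ZMod p) G) (T : Set M) = N :=
  submodule_of_finite_index_generators_general p hp G hpg m g hgen M d S hScard hSgen N ℓ hN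
end

section
/- Let Γ be a residually finite group acting transitively on a set Ω. Suppose that for all x, y ∈ Ω with x ≠ y there exists a finite-index subgroup Δ ≤ Γ such that x and y lie in different Δ-orbits. Then for every prime p the restricted permutational wreath product F_p ≀ (Γ, Ω), i.e. the semidirect product (⊕_{x∈Ω} F_p) ⋊ Γ, is residually finite. -/
open Filter Topology
open scoped commutatorElement

/-- A group is residually finite if every nontrivial element avoids some
finite-index (normal) subgroup. -/
def IsResiduallyFinite (G : Type*) [Group G] : Prop :=
  ∀ g : G, g ≠ 1 → ∃ H : Subgroup G, H.Normal ∧ 0 < H.index ∧ g ∉ H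

/-- Conversion of additive automorphisms to multiplicative automorphisms of
the `Multiplicative` type tag, as a group homomorphism. -/
def addAutToMulAut (A : Type*) [AddGroup A] :
    Multiplicative (AddAut A) →* MulAut (Multiplicative A) where
  toFun e := AddEquiv.toMultiplicative (Multiplicative.toAdd e)
  map_one' := rfl
  map_mul' _ _ := rfl

/-- The action of `Γ` on the base group `⊕_{x ∈ Ω} F_p` of the wreath product
`F_p ≀ (Γ, Ω)`, given by `(γ • f) x = f (γ⁻¹ • x)`. -/
noncomputable def wreathPhi (p : ℕ) (G X : Type*) [Group G] [MulAction G X] :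
    G →* MulAut (Multiplicative (X →₀ ZMod p)) :=
  letI := Finsupp.comapSMul (G := G) (α := X) (M := ZMod p)
  letI := Finsupp.comapMulAction (G := G) (α := X) (M := ZMod p)
  letI := Finsupp.comapDistribMulAction (G := G) (α := X) (M := ZMod p)
  (addAutToMulAut _).comp (DistribMulAction.toAddAut G (X →₀ ZMod p))

/-- The restricted permutational wreath product `F_p ≀ (Γ, Ω)`,
i.e. the semidirect product `(⊕_{x ∈ Ω} F_p) ⋊ Γ`. -/
abbrev WreathProduct (p : ℕ) (G X : Type*) [Group G] [MulAction G X] :=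
  SemidirectProduct (Multiplicative (X →₀ ZMod p)) G (wreathPhi p G X)

/-!
Let `1 ≠ w = (f, γ)` in `F_p ≀ (Γ, Ω)`. Choose a finite-index subgroup `K ≤ Γ` with `γ ∉ K`
(or `K = Γ` if `γ = 1`), and intersect it with finitely many finite-index subgroups separating
the points of the support of `f` into distinct orbits; the normal core `Δ` of the intersection
still has finite index. Then `Ω/Δ` is finite by transitivity, `Γ/Δ` acts on it, and the map
`F_p ≀ (Γ, Ω) → F_p ≀ (Γ/Δ, Ω/Δ)` induced by `Ω → Ω/Δ` lands in a finite group; it does not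
kill `w`, since `γ ∉ Δ` unless `γ = 1`, and `Ω → Ω/Δ` is injective on the support of `f`.
-/

open MulAction Finsupp

theorem isResiduallyFinite_iff_residuallyFinite (G : Type*) [Group G] :
    IsResiduallyFinite G ↔ Group.ResiduallyFinite G := by
  rw [Group.residuallyFinite_iff_exists_finiteIndex]
  refine forall₂_congr fun g _ => ⟨?_, ?_⟩
  · rintro ⟨H, -, hH, hg⟩
    exact ⟨H, ⟨hH.ne'⟩, hg⟩
  · rintro ⟨H, hH, hg⟩
    exact ⟨H.normalCore, H.normalCore_normal,
      Nat.pos_of_ne_zero H.normalCore.index_ne_zero_of_finite, fun h => hg (H.normalCore_le h)⟩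

instance SemidirectProduct.finite {N G : Type*} [Group N] [Group G] {φ : G →* MulAut N}
    [Finite N] [Finite G] : Finite (N ⋊[φ] G) :=
  Finite.of_equiv _ SemidirectProduct.equivProd.symm

section OrbitQuotient

variable {Γ Ω : Type*} [Group Γ] [MulAction Γ Ω] (Δ : Subgroup Γ)

instance [IsPretransitive Γ Ω] [Δ.FiniteIndex] : Finite (orbitRel.Quotient Δ Ω) :=
  have := (pretransitive_iff_subsingleton_quotient Γ Ω).mp inferInstance
  have : Finite (Γ ⧸ Δ) := Δ.finite_quotient_of_finiteIndex
  inferInstance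

variable [Δ.Normal]

instance : MulAction Γ (orbitRel.Quotient Δ Ω) where
  smul γ := Quotient.map (γ • ·) fun x y ⟨δ, hδ⟩ =>
    ⟨⟨γ * δ * γ⁻¹, ‹Δ.Normal›.conj_mem δ δ.2 γ⟩, by simp [← hδ, mul_smul, Subgroup.smul_def]⟩
  one_smul := Quotient.ind fun x => congrArg _ (one_smul Γ x)
  mul_smul a b := Quotient.ind fun x => congrArg _ (mul_smul a b x)

instance : MulAction (Γ ⧸ Δ) (orbitRel.Quotient Δ Ω) :=
  ofEndHom <| QuotientGroup.lift Δ toEndHom fun δ hδ =>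
    funext <| Quotient.ind fun _ => Quotient.sound ⟨⟨δ, hδ⟩, rfl⟩

end OrbitQuotient

section Separation

variable {Γ Ω : Type*} [Group Γ] [MulAction Γ Ω]

theorem exists_normal_le_injOn_orbitRel
    (hsep : ∀ x y : Ω, x ≠ y → ∃ Δ : Subgroup Γ, 0 < Δ.index ∧ y ∉ orbit Δ x)
    (K : Subgroup Γ) [K.FiniteIndex] (s : Finset Ω) :
    ∃ Δ : Subgroup Γ, Δ.Normal ∧ Δ.FiniteIndex ∧ Δ ≤ K ∧
      Set.InjOn (Quotient.mk (orbitRel Δ Ω)) s := by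
  have hpair : ∀ x y : Ω, ∃ Δ : Subgroup Γ, Δ.FiniteIndex ∧ (x ≠ y → y ∉ orbit Δ x) := by
    intro x y
    by_cases hxy : x = y
    · exact ⟨⊤, inferInstance, fun h => (h hxy).elim⟩
    · obtain ⟨Δ, hΔ, hy⟩ := hsep x y hxy
      exact ⟨Δ, ⟨hΔ.ne'⟩, fun _ => hy⟩
  choose D hD hDsep using hpair
  let Δ₀ := K ⊓ ⨅ (x : s) (y : s), D x y
  have : (⨅ (x : s) (y : s), D x y).FiniteIndex :=
    Subgroup.finiteIndex_iInf fun x => Subgroup.finiteIndex_iInf fun y => hD x y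
  refine ⟨Δ₀.normalCore, Δ₀.normalCore_normal, inferInstance,
    Δ₀.normalCore_le.trans inf_le_left, fun x hx y hy hxy => ?_⟩
  by_contra hne
  have hle : Δ₀.normalCore ≤ D y x := Δ₀.normalCore_le.trans <| inf_le_right.trans <|
    (iInf_le _ (⟨y, hy⟩ : s)).trans (iInf_le _ (⟨x, hx⟩ : s))
  obtain ⟨δ, hδ⟩ := mem_orbit_iff.mp (Quotient.exact hxy)
  exact hDsep y x (Ne.symm hne) (mem_orbit_iff.mpr ⟨⟨δ, hle δ.2⟩, hδ⟩)

end Separation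

namespace WreathProduct

variable (p : ℕ) {G H X Y : Type*} [Group G] [Group H] [MulAction G X] [MulAction H Y]

noncomputable def map (π : G →* H) (q : X → Y) (hq : ∀ g x, q (g • x) = π g • q x) :
    WreathProduct p G X →* WreathProduct p H Y :=
  SemidirectProduct.map (mapDomain.addMonoidHom q).toMultiplicative π fun g =>
    MonoidHom.ext fun f => by
      change Multiplicative.ofAdd (mapDomain q (mapDomain (g • ·) f.toAdd)) =
        .ofAdd (mapDomain (π g • ·) (mapDomain q f.toAdd))
      rw [← mapDomain_comp, ← mapDomain_comp]
      exact congrArg _ (congrArg₂ _ (funext (hq g)) rfl)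

theorem eq_one_of_map_eq_one {π : G →* H} {q : X → Y} {hq : ∀ g x, q (g • x) = π g • q x}
    {w : WreathProduct p G X} (hw : map p π q hq w = 1) (hπ : π w.right = 1 → w.right = 1)
    (hinj : Set.InjOn q (w.left.toAdd.support)) : w = 1 := by
  classical
  have hleft : mapDomain q w.left.toAdd = 0 := congrArg SemidirectProduct.left hw
  refine SemidirectProduct.ext ?_ (hπ (congrArg SemidirectProduct.right hw))
  rw [← support_eq_empty, mapDomain_support_of_injOn _ hinj, Finset.image_eq_empty,
    support_eq_empty] at hleft
  exact hleft

instance [NeZero p] [Finite H] [Finite Y] : Finite (WreathProduct p H Y) :=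
  have : Finite (Y →₀ ZMod p) := Finite.of_equiv _ equivFunOnFinite.symm
  inferInstance

end WreathProduct

theorem wreath_product_residually_finite
    (Γ Ω : Type*) [Group Γ] [MulAction Γ Ω] [MulAction.IsPretransitive Γ Ω]
    (hres : IsResiduallyFinite Γ)
    (hsep : ∀ x y : Ω, x ≠ y → ∃ Δ : Subgroup Γ, 0 < Δ.index ∧
      y ∉ MulAction.orbit ↥Δ x)
    (p : ℕ) (hp : p.Prime) :
    IsResiduallyFinite (WreathProduct p Γ Ω) := by
  rw [isResiduallyFinite_iff_residuallyFinite] at hres ⊢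
  refine Group.residuallyFinite_of_forall_exists_finite_monoidHom fun w hw => ?_
  obtain ⟨K, hK, hwK⟩ : ∃ K : Subgroup Γ, K.FiniteIndex ∧ (w.right ∈ K → w.right = 1) := by
    by_cases h : w.right = 1
    · exact ⟨⊤, inferInstance, fun _ => h⟩
    · obtain ⟨K, hK, hwK⟩ := Group.residuallyFinite_iff_exists_finiteIndex.mp hres _ h
      exact ⟨K, hK, fun h' => (hwK h').elim⟩
  obtain ⟨Δ, hΔ, hΔi, hΔK, hinj⟩ := exists_normal_le_injOn_orbitRel hsep K w.left.toAdd.support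
  have : NeZero p := ⟨hp.ne_zero⟩
  refine ⟨_, _, inferInstance,
    WreathProduct.map p (QuotientGroup.mk' Δ) (Quotient.mk (orbitRel Δ Ω)) fun _ _ => rfl,
    fun h => hw (WreathProduct.eq_one_of_map_eq_one p h (fun hΔw => hwK ?_) hinj)⟩
  exact hΔK ((QuotientGroup.eq_one_iff _).mp hΔw)
end

section
/- Let Γ be a group acting on a set Ω and Δ a group acting on a set Λ, and let U be a subgroup of the direct product Γ × Δ, which acts componentwise on Ω × Λ. Let U₁ = {g ∈ Γ : (g,1) ∈ U}, acting on Ω, and let U₂ ≤ Δ be the image of U under the projection Γ × Δ → Δ, acting on Λ. Suppose the action of U₁ on Ω has at most m orbits and the action of U₂ on Λ has at most n orbits. Then the action of U on Ω × Λ has at most m·n orbits. -/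
/-- The componentwise action of a product group `Γ × Δ` on a product set
`Ω × Λ`. -/
def prodPairAction (Γ Δ Ω Λ : Type*) [Group Γ] [Group Δ]
    [MulAction Γ Ω] [MulAction Δ Λ] : MulAction (Γ × Δ) (Ω × Λ) where
  smul gd wl := (gd.1 • wl.1, gd.2 • wl.2)
  one_smul := fun ⟨w, l⟩ => by
    show ((1 : Γ) • w, (1 : Δ) • l) = (w, l)
    simp
  mul_smul := fun ⟨g, d⟩ ⟨g', d'⟩ ⟨w, l⟩ => by
    show ((g * g') • w, (d * d') • l) = (g • g' • w, d • d' • l)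
    simp [mul_smul]

attribute [local instance] prodPairAction

theorem orbit_count_of_product_action
    (Γ Δ Ω Λ : Type*) [Group Γ] [Group Δ] [MulAction Γ Ω] [MulAction Δ Λ]
    (U : Subgroup (Γ × Δ)) (m n : ℕ)
    (h₁ : ∃ s : Finset Ω, s.card ≤ m ∧ ∀ x : Ω, ∃ y ∈ s,
      x ∈ MulAction.orbit ↥(U.comap (MonoidHom.inl Γ Δ)) y)
    (h₂ : ∃ s : Finset Λ, s.card ≤ n ∧ ∀ x : Λ, ∃ y ∈ s,
      x ∈ MulAction.orbit ↥(U.map (MonoidHom.snd Γ Δ)) y) :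
    ∃ s : Finset (Ω × Λ), s.card ≤ m * n ∧ ∀ z : Ω × Λ, ∃ w ∈ s,
      z ∈ MulAction.orbit ↥U w := by
  obtain ⟨s₁, hs₁, hcov₁⟩ := h₁
  obtain ⟨s₂, hs₂, hcov₂⟩ := h₂
  refine ⟨s₁ ×ˢ s₂, ?_, ?_⟩
  · calc (s₁ ×ˢ s₂).card = s₁.card * s₂.card := Finset.card_product _ _
      _ ≤ m * n := Nat.mul_le_mul hs₁ hs₂
  · rintro ⟨x, l⟩
    obtain ⟨y₂, hy₂, ⟨⟨d, ⟨g, d'⟩, hgd', hd'⟩, hd⟩⟩ := hcov₂ l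
    subst hd'
    simp only at hd
    obtain ⟨y₁, hy₁, ⟨⟨h, hh⟩, hhy⟩⟩ := hcov₁ (g⁻¹ • x)
    rw [Subgroup.mem_comap] at hh
    refine ⟨(y₁, y₂), Finset.mk_mem_product hy₁ hy₂,
      ⟨⟨(g, d') * (h, 1), mul_mem hgd' hh⟩, ?_⟩⟩
    show ((g * h) • y₁, (d' * 1) • y₂) = (x, l)
    have hhy' : h • y₁ = g⁻¹ • x := hhy
    have hd'' : d' • y₂ = l := hd
    rw [mul_smul, hhy', smul_inv_smul, mul_one, hd'']
end

section
/- Let p ≥ 2 be an integer (in particular any prime), let k ≥ 1 and m ≥ 0 be natural numbers, and let m₁, …, m_k be natural numbers such that m₁ = 0 and p^{m₁} + p^{m₂} + ⋯ + p^{m_k} = p^m. Then k ≥ (p−1)·m + 1. -/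
lemma sum_p_powers_aux (p : ℕ) (hp : 2 ≤ p) :
    ∀ n : ℕ, ∀ (s : Multiset ℕ) (μ m : ℕ), (m - μ) + Multiset.card s ≤ n →
    μ ∈ s → (∀ x ∈ s, μ ≤ x) →
    (s.map (fun x => p ^ x)).sum = p ^ m →
    (p - 1) * (m - μ) + 1 ≤ Multiset.card s := by
  intro n
  induction n with
  | zero =>
    intro s μ m hn hμ _ _
    have : Multiset.card s = 0 := by omega
    rw [Multiset.card_eq_zero] at this
    subst this
    simp at hμ
  | succ n ih =>
    intro s μ m hn hμ hlb hsum
    have hcard1 : 1 ≤ Multiset.card s := Multiset.card_pos_iff_exists_mem.2 ⟨μ, hμ⟩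
    by_cases hmμ : m ≤ μ
    · rw [Nat.sub_eq_zero_of_le hmμ]
      simpa using hcard1
    push_neg at hmμ
    have hp0 : 0 < p := by omega
    -- divide the sum by p ^ μ
    have hdiv : (s.map (fun x => p ^ (x - μ))).sum = p ^ (m - μ) := by
      have h1 : (s.map (fun x => p ^ x)).sum
          = p ^ μ * (s.map (fun x => p ^ (x - μ))).sum := by
        rw [← Multiset.sum_map_mul_left]
        apply congrArg
        apply Multiset.map_congr rfl
        intro x hx
        rw [← pow_add]
        congr 1
        have := hlb x hx
        omega
      have h2 : p ^ m = p ^ μ * p ^ (m - μ) := by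
        rw [← pow_add]
        congr 1
        omega
      rw [h1, h2] at hsum
      exact Nat.eq_of_mul_eq_mul_left (pow_pos hp0 μ) hsum
    set t := s.count μ with ht
    have ht1 : 1 ≤ t := Multiset.count_pos.2 hμ
    -- p divides t
    have hpt : p ∣ t := by
      have hsplit : s.filter (· = μ) + s.filter (fun x => ¬ x = μ) = s :=
        Multiset.filter_add_not _ s
      have hfeq : s.filter (· = μ) = Multiset.replicate t μ := by
        rw [Multiset.filter_eq']
      have hsum2 : (s.map (fun x => p ^ (x - μ))).sum
          = t + ((s.filter (fun x => ¬ x = μ)).map (fun x => p ^ (x - μ))).sum := by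
        conv_lhs => rw [← hsplit]
        rw [Multiset.map_add, Multiset.sum_add, hfeq]
        congr 1
        simp [Multiset.map_replicate, Multiset.sum_replicate]
      have hdvd2 : p ∣ ((s.filter (fun x => ¬ x = μ)).map (fun x => p ^ (x - μ))).sum := by
        apply Multiset.dvd_sum
        intro y hy
        rw [Multiset.mem_map] at hy
        obtain ⟨x, hx, rfl⟩ := hy
        rw [Multiset.mem_filter] at hx
        have hxμ : μ ≤ x := hlb x hx.1
        have : x - μ ≠ 0 := by
          have := hx.2
          omega
        exact dvd_pow_self p this
      have hdvdm : p ∣ p ^ (m - μ) := dvd_pow_self p (by omega)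
      rw [hdiv] at hsum2
      have : t = p ^ (m - μ) - ((s.filter (fun x => ¬ x = μ)).map (fun x => p ^ (x - μ))).sum := by
        omega
      rw [this]
      exact Nat.dvd_sub hdvdm hdvd2
    have htp : p ≤ t := Nat.le_of_dvd (by omega) hpt
    have hrepl : Multiset.replicate p μ ≤ s := by
      rw [Multiset.le_iff_count]
      intro a
      rw [Multiset.count_replicate]
      split_ifs with h
      · subst h; exact htp
      · exact Nat.zero_le _
    set s₂ : Multiset ℕ := (μ + 1) ::ₘ (s - Multiset.replicate p μ) with hs₂
    have hcards : p ≤ Multiset.card s := by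
      calc p = Multiset.card (Multiset.replicate p μ) := by simp
        _ ≤ Multiset.card s := Multiset.card_le_card hrepl
    have hcard2 : Multiset.card s₂ = Multiset.card s - p + 1 := by
      rw [hs₂, Multiset.card_cons, Multiset.card_sub hrepl]
      simp
    -- sum over s₂
    have hsum₂ : (s₂.map (fun x => p ^ x)).sum = p ^ m := by
      have hsplit : (s - Multiset.replicate p μ) + Multiset.replicate p μ = s :=
        tsub_add_cancel_of_le hrepl
      have h3 : ((s - Multiset.replicate p μ).map (fun x => p ^ x)).sum + p * p ^ μ
          = p ^ m := by
        rw [← hsum]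
        conv_rhs => rw [← hsplit]
        rw [Multiset.map_add, Multiset.sum_add]
        congr 1
        simp [Multiset.map_replicate, Multiset.sum_replicate, mul_comm]
      rw [hs₂, Multiset.map_cons, Multiset.sum_cons, pow_succ, ← h3]
      ring
    have hsub_le : s - Multiset.replicate p μ ≤ s := tsub_le_self
    by_cases hμ2 : μ ∈ s - Multiset.replicate p μ
    · -- μ still present
      have := ih s₂ μ m (by omega) (Multiset.mem_cons_of_mem hμ2)
        (by
          intro x hx
          rcases Multiset.mem_cons.1 hx with h | h
          · omega
          · exact hlb x (Multiset.mem_of_le hsub_le h))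
        hsum₂
      omega
    · -- all remaining elements are ≥ μ + 1
      have hkey := ih s₂ (μ + 1) m (by omega) (Multiset.mem_cons_self _ _)
        (by
          intro x hx
          rcases Multiset.mem_cons.1 hx with h | h
          · omega
          · have hx' : x ∈ s := Multiset.mem_of_le hsub_le h
            have := hlb x hx'
            have : x ≠ μ := by
              intro hxx
              exact hμ2 (hxx ▸ h)
            omega)
        hsum₂
      have hmul : (p - 1) * (m - μ) = (p - 1) * (m - (μ + 1)) + (p - 1) := by
        have hx : m - μ = (m - (μ + 1)) + 1 := by omega
        rw [hx, mul_add, mul_one]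
      omega

theorem sum_of_p_powers_with_unit_summand
    (p : ℕ) (hp : 2 ≤ p) (k m : ℕ) (hk : 1 ≤ k)
    (ms : Fin k → ℕ) (h1 : ms ⟨0, hk⟩ = 0)
    (hsum : ∑ i : Fin k, p ^ ms i = p ^ m) :
    (p - 1) * m + 1 ≤ k := by
  have hmem : (0 : ℕ) ∈ (Finset.univ.val.map ms : Multiset ℕ) :=
    Multiset.mem_map.2 ⟨⟨0, hk⟩, Finset.mem_univ_val _, h1⟩
  have hsum' : ((Finset.univ.val.map ms).map (fun x => p ^ x)).sum = p ^ m := by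
    rw [Multiset.map_map]
    exact hsum
  have hcard : Multiset.card (Finset.univ.val.map ms) = k := by
    simp
  have := sum_p_powers_aux p hp (m + k) (Finset.univ.val.map ms) 0 m
    (by rw [hcard]; omega) hmem (fun x _ => Nat.zero_le x) hsum'
  simpa [hcard] using this
end
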